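/- arXiv:2312.13990 — 2 statements merged into one kernel-verified Lean document; each statement's English description precedes it below -/
import Mathlib

section
/- For positive integers μ, ν with μ(ν−1) > 4 and ν > 2, the dense region for (μ, ν−1) contains the fundamental region for (μ, ν): specifically ρ₋^{(μ,ν−1)} < 2/μ and ν/2 < ρ₊^{(μ,ν−1)}, where ρ±^{(μ,ν−1)} = (μ(ν−1) ± √(μ(ν−1)(μ(ν−1)−4)))/(2μ). -/
lemma key_int (a b : ℤ) (ha : 1 ≤ a) (hb : 2 ≤ b) (hab : 5 ≤ a * b) :
    a + 4 * b < a * b ^ 2 := by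
  rcases eq_or_lt_of_le hb with hb2 | hb3
  · subst hb2
    have h3 : 3 ≤ a := by omega
    nlinarith
  · have hb3 : 3 ≤ b := hb3
    nlinarith [mul_le_mul hab (le_refl b) (by linarith) (by nlinarith)]

theorem dense_contains_fundamental (μ ν : ℕ) (hμ : 0 < μ) (hν : 2 < ν)
    (h : 4 < μ * (ν - 1)) :
    let m : ℝ := (μ : ℝ) * ((ν : ℝ) - 1)
    let D : ℝ := m * (m - 4)
    (m - Real.sqrt D) / (2 * μ) < 2 / (μ : ℝ) ∧
    (ν : ℝ) / 2 < (m + Real.sqrt D) / (2 * μ) := by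
  intro m D
  have hμR : (0:ℝ) < μ := by exact_mod_cast hμ
  have hbR : (2:ℝ) ≤ (ν:ℝ) - 1 := by
    have : (3:ℝ) ≤ ν := by exact_mod_cast hν
    linarith
  have hm5 : (5:ℝ) ≤ m := by
    have h5 : 5 ≤ μ * (ν - 1) := h
    have : (5:ℝ) ≤ ((μ * (ν - 1) : ℕ) : ℝ) := by exact_mod_cast h5
    have hcast : ((μ * (ν - 1) : ℕ) : ℝ) = m := by
      push_cast [Nat.cast_sub (by omega : 1 ≤ ν)]
      ring
    rwa [hcast] at this
  have hD : (0:ℝ) < D := by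
    have : (0:ℝ) < m - 4 := by linarith
    positivity
  have hDeq : D = m * (m - 4) := rfl
  have hsD : m - 4 < Real.sqrt D := by
    rw [Real.lt_sqrt (by linarith : (0:ℝ) ≤ m - 4)]
    nlinarith
  have hsD2 : (μ:ℝ) < Real.sqrt D := by
    rw [Real.lt_sqrt hμR.le]
    have h5 : (5:ℤ) ≤ (μ:ℤ) * ((ν:ℤ) - 1) := by
      have h' := h
      zify [show 1 ≤ ν by omega] at h'
      linarith
    have hint := key_int (μ:ℤ) ((ν:ℤ) - 1) (by exact_mod_cast hμ)
      (by push_cast; omega) h5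
    have hk : (μ:ℝ) + 4 * ((ν:ℝ) - 1) < (μ:ℝ) * ((ν:ℝ) - 1) ^ 2 := by
      exact_mod_cast hint
    show (μ:ℝ) ^ 2 < ((μ:ℝ) * ((ν:ℝ) - 1)) * ((μ:ℝ) * ((ν:ℝ) - 1) - 4)
    nlinarith [mul_lt_mul_of_pos_left hk hμR]
  constructor
  · rw [div_lt_div_iff₀ (by positivity) hμR]
    nlinarith
  · rw [div_lt_div_iff₀ (by norm_num) (by positivity)]
    have : (ν:ℝ) * (2 * μ) = (m + μ) * 2 := by simp only [m]; ring
    nlinarith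
end

section
/- The dense-region membership condition μb² + νa² < μν·ab is preserved by the mutations T1(a,b) = (μb − a, b) and T2(a,b) = (a, νa − b), provided the images stay in the positive quadrant. -/
theorem mutations_preserve_dense_condition (μ ν a b : ℤ)
    (hμ : 0 < μ) (hν : 0 < ν) (ha : 0 < a) (hb : 0 < b)
    (h : μ * b ^ 2 + ν * a ^ 2 < μ * ν * a * b) :
    (μ * b ^ 2 + ν * (μ * b - a) ^ 2 < μ * ν * (μ * b - a) * b) ∧
    (μ * (ν * a - b) ^ 2 + ν * a ^ 2 < μ * ν * a * (ν * a - b)) ∧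
    0 < μ * b - a ∧ 0 < ν * a - b := by
  refine ⟨by nlinarith, by nlinarith, ?_, ?_⟩
  · nlinarith [mul_pos hμ (mul_pos hb hb), mul_pos hν (mul_pos ha ha)]
  · nlinarith [mul_pos hμ (mul_pos hb hb), mul_pos hν (mul_pos ha ha)]
end
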